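/- Suppose z ∈ ℂ, z ≠ 0, the matrix (z+z⁻¹)·1_M − D is invertible, and Q(z) and Q(z⁻¹) are invertible. Then γ(z) · [[𝕊(z), 0],[z⁻¹·Ψ(z), −z⁻²·1_M]] = −γ(z⁻¹), where the matrix in brackets is written in block form with respect to the decomposition ℂ^{N+M} = ℂ^N ⊕ ℂ^M. In particular, whenever γ(z) is also invertible, −γ(z)⁻¹·γ(z⁻¹) = [[𝕊(z), 0],[z⁻¹·Ψ(z), −z⁻²·1_M]]. -/

import Mathlib

open Matrix

/-- `F(z) := A + B† ((z+z⁻¹)·1_M − D)⁻¹ B`. -/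
noncomputable def Fmat {N M : ℕ} (A : Matrix (Fin N) (Fin N) ℂ)
    (B : Matrix (Fin M) (Fin N) ℂ) (D : Matrix (Fin M) (Fin M) ℂ) (z : ℂ) :
    Matrix (Fin N) (Fin N) ℂ :=
  A + Bᴴ * ((z + z⁻¹) • (1 : Matrix (Fin M) (Fin M) ℂ) - D)⁻¹ * B

/-- `Q(z) := 1_N − z·F(z)`. -/
noncomputable def Qmat {N M : ℕ} (A : Matrix (Fin N) (Fin N) ℂ)
    (B : Matrix (Fin M) (Fin N) ℂ) (D : Matrix (Fin M) (Fin M) ℂ) (z : ℂ) :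
    Matrix (Fin N) (Fin N) ℂ :=
  1 - z • Fmat A B D z

/-- `𝕊(z) := −Q(z⁻¹)·Q(z)⁻¹`. -/
noncomputable def Smat {N M : ℕ} (A : Matrix (Fin N) (Fin N) ℂ)
    (B : Matrix (Fin M) (Fin N) ℂ) (D : Matrix (Fin M) (Fin M) ℂ) (z : ℂ) :
    Matrix (Fin N) (Fin N) ℂ :=
  -(Qmat A B D z⁻¹) * (Qmat A B D z)⁻¹

/-- `Ψ(z) := ((z+z⁻¹)·1_M − D)⁻¹·B·(z⁻¹·1_N + z·𝕊(z))`. -/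
noncomputable def PsiMat {N M : ℕ} (A : Matrix (Fin N) (Fin N) ℂ)
    (B : Matrix (Fin M) (Fin N) ℂ) (D : Matrix (Fin M) (Fin M) ℂ) (z : ℂ) :
    Matrix (Fin M) (Fin N) ℂ :=
  ((z + z⁻¹) • (1 : Matrix (Fin M) (Fin M) ℂ) - D)⁻¹ * B *
    (z⁻¹ • (1 : Matrix (Fin N) (Fin N) ℂ) + z • Smat A B D z)

/-- `H_G := [[A, B†],[B, D]]`. -/
def HGmat {N M : ℕ} (A : Matrix (Fin N) (Fin N) ℂ)
    (B : Matrix (Fin M) (Fin N) ℂ) (D : Matrix (Fin M) (Fin M) ℂ) :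
    Matrix (Fin N ⊕ Fin M) (Fin N ⊕ Fin M) ℂ :=
  fromBlocks A Bᴴ B D

/-- `P_M`, the diagonal projection onto the last `M` coordinates. -/
def PMmat (N M : ℕ) : Matrix (Fin N ⊕ Fin M) (Fin N ⊕ Fin M) ℂ :=
  fromBlocks 0 0 0 1

/-- `γ(z) := −z²·P_M + z·H_G − 1`. -/
noncomputable def gammaMat {N M : ℕ} (A : Matrix (Fin N) (Fin N) ℂ)
    (B : Matrix (Fin M) (Fin N) ℂ) (D : Matrix (Fin M) (Fin M) ℂ) (z : ℂ) :
    Matrix (Fin N ⊕ Fin M) (Fin N ⊕ Fin M) ℂ :=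
  -(z ^ 2) • PMmat N M + z • HGmat A B D - 1

/-! Since `w·D − (w² + 1) = −w·W` with `W = (w + w⁻¹) − D` invariant under `w ↦ w⁻¹`, both
`γ(z)` and `γ(z⁻¹)` are the pencil `[[wA − 1, wB†], [wB, −wW]]` with the same `W`. The Schur
complement of its internal block is `w·F − 1 = −Q(w)`, with the same `F` at `z` and `z⁻¹`, so
`Q(z)` and `Q(z⁻¹)` commute and `Q(z)·𝕊(z) = −Q(z⁻¹)`: this is the boundary block of the
identity, and the other three blocks follow from the definition of `Ψ`. -/

section BlockPencil

variable {𝕜 n m : Type*} [Field 𝕜] [Fintype n] [Fintype m] [DecidableEq n] [DecidableEq m]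

def blockPencil (A : Matrix n n 𝕜) (C : Matrix n m 𝕜) (B : Matrix m n 𝕜) (W : Matrix m m 𝕜)
    (z : 𝕜) : Matrix (n ⊕ m) (n ⊕ m) 𝕜 :=
  fromBlocks (z • A - 1) (z • C) (z • B) (-z • W)

theorem blockPencil_mul_eq_neg_blockPencil_inv (A : Matrix n n 𝕜) (C : Matrix n m 𝕜)
    (B : Matrix m n 𝕜) {W : Matrix m m 𝕜} (S : Matrix n n 𝕜) {z : 𝕜} (hz : z ≠ 0)
    (hW : IsUnit W.det)
    (hS : (1 - z • (A + C * W⁻¹ * B)) * S = -(1 - z⁻¹ • (A + C * W⁻¹ * B))) :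
    blockPencil A C B W z *
        fromBlocks S 0 (z⁻¹ • (W⁻¹ * B * (z⁻¹ • 1 + z • S))) (-(z ^ 2)⁻¹ • 1) =
      -blockPencil A C B W z⁻¹ := by
  rw [blockPencil, blockPencil, fromBlocks_multiply, fromBlocks_neg]
  refine fromBlocks_inj.mpr ⟨?_, ?_, ?_, ?_⟩
  · have hS' : (z • A - 1) * S = (1 - z⁻¹ • (A + C * W⁻¹ * B)) - z • (C * W⁻¹ * B) * S := by
      rw [← neg_neg (1 - z⁻¹ • _), ← hS]
      simp only [sub_mul, smul_mul, smul_add, add_mul, one_mul]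
      abel
    simp only [hS', Matrix.mul_add, Matrix.smul_mul, Matrix.mul_smul, smul_smul,
      smul_add, Matrix.mul_one, Matrix.mul_assoc]
    match_scalars <;> field_simp <;> ring
  · simp only [Matrix.mul_zero, zero_add, Matrix.mul_smul, smul_smul, Matrix.mul_one]
    match_scalars
    field_simp
  · simp only [Matrix.mul_add, Matrix.smul_mul, Matrix.mul_smul, smul_smul, smul_add,
      Matrix.mul_one, Matrix.mul_assoc, mul_nonsing_inv_cancel_left _ _ hW]
    match_scalars <;> field_simp; ring
  · simp only [Matrix.mul_zero, zero_add, Matrix.mul_smul, smul_smul, Matrix.mul_one]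
    match_scalars
    field_simp

end BlockPencil

section Scattering

variable {N M : ℕ} (A : Matrix (Fin N) (Fin N) ℂ) (B : Matrix (Fin M) (Fin N) ℂ)
  (D : Matrix (Fin M) (Fin M) ℂ)

theorem gammaMat_eq_blockPencil {w : ℂ} (hw : w ≠ 0) :
    gammaMat A B D w = blockPencil A Bᴴ B ((w + w⁻¹) • 1 - D) w := by
  rw [gammaMat, HGmat, PMmat, blockPencil, fromBlocks_smul, fromBlocks_smul,
    ← fromBlocks_one, fromBlocks_add, sub_eq_add_neg, fromBlocks_neg, fromBlocks_add]
  refine fromBlocks_inj.mpr ⟨?_, ?_, ?_, ?_⟩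
  · simp [sub_eq_add_neg]
  · simp
  · simp
  · match_scalars <;> field_simp; ring

theorem Fmat_inv (z : ℂ) : Fmat A B D z⁻¹ = Fmat A B D z := by
  rw [Fmat, Fmat, inv_inv, add_comm z⁻¹]

theorem Qmat_mul_Smat {z : ℂ} (hQ : IsUnit (Qmat A B D z)) :
    Qmat A B D z * Smat A B D z = -Qmat A B D z⁻¹ := by
  have hcomm : Commute (Qmat A B D z) (Qmat A B D z⁻¹) := by
    rw [Qmat, Qmat, Fmat_inv]
    exact (Commute.one_right _).sub_right
      ((Commute.one_left _).sub_left (((Commute.refl _).smul_left z).smul_right z⁻¹))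
  rw [Smat, neg_mul, mul_neg, ← mul_assoc, hcomm.eq,
    mul_nonsing_inv_cancel_right _ _ ((isUnit_iff_isUnit_det _).mp hQ)]

end Scattering

theorem gamma_S_Psi_relation_general {N M : ℕ}
    (A : Matrix (Fin N) (Fin N) ℂ) (B : Matrix (Fin M) (Fin N) ℂ)
    (D : Matrix (Fin M) (Fin M) ℂ) (z : ℂ) (hz : z ≠ 0)
    (hD : IsUnit ((z + z⁻¹) • (1 : Matrix (Fin M) (Fin M) ℂ) - D))
    (hQ : IsUnit (Qmat A B D z)) :
    gammaMat A B D z *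
        fromBlocks (Smat A B D z) 0 (z⁻¹ • PsiMat A B D z)
          (-(z ^ 2)⁻¹ • (1 : Matrix (Fin M) (Fin M) ℂ)) =
      -(gammaMat A B D z⁻¹) ∧
    (IsUnit (gammaMat A B D z) →
      -((gammaMat A B D z)⁻¹ * gammaMat A B D z⁻¹) =
        fromBlocks (Smat A B D z) 0 (z⁻¹ • PsiMat A B D z)
          (-(z ^ 2)⁻¹ • (1 : Matrix (Fin M) (Fin M) ℂ))) := by
  have hγ : gammaMat A B D z *
      fromBlocks (Smat A B D z) 0 (z⁻¹ • PsiMat A B D z)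
        (-(z ^ 2)⁻¹ • (1 : Matrix (Fin M) (Fin M) ℂ)) = -(gammaMat A B D z⁻¹) := by
    have hS := Qmat_mul_Smat A B D hQ
    rw [Qmat, Qmat, Fmat_inv, Fmat] at hS
    rw [gammaMat_eq_blockPencil A B D hz, gammaMat_eq_blockPencil A B D (inv_ne_zero hz),
      inv_inv, add_comm z⁻¹ z, PsiMat]
    exact blockPencil_mul_eq_neg_blockPencil_inv A Bᴴ B _ hz
      ((isUnit_iff_isUnit_det _).mp hD) hS
  refine ⟨hγ, fun hγu => ?_⟩
  rw [← neg_neg (gammaMat A B D z⁻¹), ← hγ, mul_neg, neg_neg,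
    nonsing_inv_mul_cancel_left _ _ ((isUnit_iff_isUnit_det _).mp hγu)]

/-- `γ(z)·[[𝕊(z), 0],[z⁻¹Ψ(z), −z⁻²·1_M]] = −γ(z⁻¹)`, and when `γ(z)` is
invertible, `−γ(z)⁻¹·γ(z⁻¹) = [[𝕊(z), 0],[z⁻¹Ψ(z), −z⁻²·1_M]]`. -/
theorem gamma_S_Psi_relation {N M : ℕ} (hN : 0 < N) (hM : 0 < M)
    (A : Matrix (Fin N) (Fin N) ℂ) (B : Matrix (Fin M) (Fin N) ℂ)
    (D : Matrix (Fin M) (Fin M) ℂ) (z : ℂ) (hz : z ≠ 0)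
    (hD : IsUnit ((z + z⁻¹) • (1 : Matrix (Fin M) (Fin M) ℂ) - D))
    (hQ : IsUnit (Qmat A B D z)) (hQ' : IsUnit (Qmat A B D z⁻¹)) :
    gammaMat A B D z *
        fromBlocks (Smat A B D z) 0 (z⁻¹ • PsiMat A B D z)
          (-(z ^ 2)⁻¹ • (1 : Matrix (Fin M) (Fin M) ℂ)) =
      -(gammaMat A B D z⁻¹) ∧
    (IsUnit (gammaMat A B D z) →
      -((gammaMat A B D z)⁻¹ * gammaMat A B D z⁻¹) =
        fromBlocks (Smat A B D z) 0 (z⁻¹ • PsiMat A B D z)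
          (-(z ^ 2)⁻¹ • (1 : Matrix (Fin M) (Fin M) ℂ))) :=
  gamma_S_Psi_relation_general A B D z hz hD hQ
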